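/- For every m ≥ 1 and c ≥ 1, any graph P with treewidth τ(P) ≥ cm + c is not a minor of the hardware graph F(m,c). -/

import Mathlib

open SimpleGraph

/-- A tree decomposition of `G` with tree `T` and bags `B`. -/
def IsTreeDecomp {V I : Type} (G : SimpleGraph V) (T : SimpleGraph I)
    (B : I → Finset V) : Prop :=
  T.IsTree ∧
  (∀ v : V, ∃ i : I, v ∈ B i) ∧
  (∀ u v : V, G.Adj u v → ∃ i : I, u ∈ B i ∧ v ∈ B i) ∧
  (∀ v : V, (T.induce {i : I | v ∈ B i}).Connected)

/-- The treewidth of `G`: the least `k` such that `G` has a tree decomposition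
all of whose bags have at most `k + 1` vertices (i.e. width at most `k`). -/
noncomputable def treewidth {V : Type} (G : SimpleGraph V) : ℕ :=
  sInf {k : ℕ | ∃ (I : Type) (T : SimpleGraph I) (B : I → Finset V),
    IsTreeDecomp G T B ∧ ∀ i : I, (B i).card ≤ k + 1}

/-- `H` is a minor of `G`: branch sets are nonempty (connectedness includes
nonemptiness), induce connected subgraphs, are pairwise disjoint, and every
edge of `H` is realized by an edge of `G` between the corresponding branch sets. -/
def IsMinor {V W : Type} (H : SimpleGraph V) (G : SimpleGraph W) : Prop :=
  ∃ φ : V → Set W,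
    (∀ v : V, (G.induce (φ v)).Connected) ∧
    (∀ u v : V, u ≠ v → Disjoint (φ u) (φ v)) ∧
    (∀ u v : V, H.Adj u v → ∃ a ∈ φ u, ∃ b ∈ φ v, G.Adj a b)

/-- The `n × m` two-dimensional grid graph: vertices `(i, j)` are adjacent iff
they differ by exactly 1 in one coordinate and agree in the other. -/
def gridGraph (n m : ℕ) : SimpleGraph (Fin n × Fin m) :=
  SimpleGraph.fromRel (fun p q =>
    (p.1 = q.1 ∧ p.2.val + 1 = q.2.val) ∨ (p.2 = q.2 ∧ p.1.val + 1 = q.1.val))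

/-- The hardware graph `F(m, c)`: an `m × m` grid of `K_{c,c}` unit cells.
A vertex `(a, b, d)` lies in cell `(a, b)`; it is on the left half if `d < c`
and the right half otherwise.  Left and right halves of a cell are completely
joined; left-half vertices are joined to their images in the cell directly
below; right-half vertices are joined to their images in the cell to the right. -/
def hardwareGraph (m c : ℕ) : SimpleGraph (Fin m × Fin m × Fin (2 * c)) :=
  SimpleGraph.fromRel (fun x y =>
    (x.1 = y.1 ∧ x.2.1 = y.2.1 ∧ x.2.2.val < c ∧ c ≤ y.2.2.val) ∨
    (x.2.1 = y.2.1 ∧ x.2.2 = y.2.2 ∧ x.2.2.val < c ∧ x.1.val + 1 = y.1.val) ∨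
    (x.1 = y.1 ∧ x.2.2 = y.2.2 ∧ c ≤ x.2.2.val ∧ x.2.1.val + 1 = y.2.1.val))


/-!
Treewidth does not increase under taking minors: pulling every bag of a tree decomposition of `G`
back along the branch sets of a minor model of `H` gives a tree decomposition of `H` on the same
tree, with bags no larger (the branch sets are disjoint). So it suffices to decompose `F(m, c)`
with bags of at most `c (m + 1)` vertices.

Write `L(a, b)` and `R(a, b)` for the two halves of cell `(a, b)`. The spine node `(A, B, false)`
holds `L(A, b)` for `b ≤ B` and `L(A - 1, b)` for `b ≥ B`; walking along the spine replaces the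
left halves of one row by those of the next and covers the vertical edges. Off the spine node
`(A, m - 1, false)`, which holds all left halves of row `A`, hangs the branch of nodes
`(A, B, true)` holding `L(A, b)` for `b ≥ B` together with `R(A, B - 1)` and `R(A, B)`; it covers
the cells and the horizontal edges of row `A`. The tree is the graph of a parent map that
decreases a rank.
-/

section ParentGraph

variable {I : Type*} {p : I → I} {r : I → ℕ} {root : I}

lemma rank_iterate_le (hdec : ∀ x, x ≠ root → r (p x) < r x) (hroot : p root = root)
    (n : ℕ) (x : I) : r (p^[n] x) ≤ r x := by
  induction n generalizing x with
  | zero => rfl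
  | succ n ih =>
    refine (ih (p x)).trans ?_
    rcases eq_or_ne x root with rfl | hx
    · rw [hroot]
    · exact (hdec x hx).le

namespace SimpleGraph

def parentGraph (p : I → I) : SimpleGraph I := SimpleGraph.fromRel fun x y => p x = y

lemma parentGraph_adj {x y : I} : (parentGraph p).Adj x y ↔ x ≠ y ∧ (p x = y ∨ p y = x) :=
  fromRel_adj _ x y

lemma parentGraph_adj_parent (hdec : ∀ x, x ≠ root → r (p x) < r x) {x : I} (hx : x ≠ root) :
    (parentGraph p).Adj x (p x) :=
  parentGraph_adj.2 ⟨fun h => (hdec x hx).ne (congrArg r h.symm), Or.inl rfl⟩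

lemma parentGraph_induce_connected (hdec : ∀ x, x ≠ root → r (p x) < r x) {S : Set I} {x₀ : I}
    (hx₀ : x₀ ∈ S) (hS : ∀ x ∈ S, x ≠ x₀ → x ≠ root ∧ p x ∈ S) :
    ((parentGraph p).induce S).Connected := by
  rw [connected_iff_exists_forall_reachable]
  refine ⟨⟨x₀, hx₀⟩, fun ⟨x, hx⟩ => ?_⟩
  induction hn : r x using Nat.strong_induction_on generalizing x with
  | _ n ih =>
    by_cases hxx₀ : x = x₀
    · subst hxx₀; rfl
    obtain ⟨hxr, hpx⟩ := hS x hx hxx₀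
    have hadj : ((parentGraph p).induce S).Adj ⟨p x, hpx⟩ ⟨x, hx⟩ :=
      (parentGraph_adj_parent hdec hxr).symm
    exact (ih _ (hn ▸ hdec x hxr) (p x) hpx rfl).trans hadj.reachable

lemma parentGraph_connected (hdec : ∀ x, x ≠ root → r (p x) < r x) : (parentGraph p).Connected :=
  (induceUnivIso _).connected_iff.mp <|
    parentGraph_induce_connected hdec (Set.mem_univ root) fun _ _ hx => ⟨hx, trivial⟩

lemma parentGraph_isBridge (hdec : ∀ x, x ≠ root → r (p x) < r x) (hroot : p root = root)
    {x : I} (hx : x ≠ root) : (parentGraph p).IsBridge s(x, p x) := by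
  -- Descendants of `x` can only be left through the edge to `p x`.
  rintro ⟨q⟩
  let D : Set I := {z | ∃ n, p^[n] z = x}
  have hpx : p x ∉ D := fun ⟨n, hn⟩ => by
    have := rank_iterate_le hdec hroot n (p x)
    rw [hn] at this
    exact this.not_gt (hdec x hx)
  obtain ⟨⟨⟨z, w⟩, hzw⟩, -, ⟨n, hn⟩, hw⟩ := q.exists_boundary_dart D ⟨0, rfl⟩ hpx
  simp only [deleteEdges_adj, parentGraph_adj, Set.mem_singleton_iff] at hzw hn hw
  obtain ⟨⟨-, hzw | hwz⟩, hne⟩ := hzw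
  · cases n with
    | zero => exact hne (by subst hn hzw; rfl)
    | succ n => exact hw ⟨n, by rwa [← hzw, ← Function.iterate_succ_apply]⟩
  · exact hw ⟨n + 1, by rwa [Function.iterate_succ_apply, hwz]⟩

lemma parentGraph_isTree (hdec : ∀ x, x ≠ root → r (p x) < r x) (hroot : p root = root) :
    (parentGraph p).IsTree := by
  refine ⟨parentGraph_connected hdec, isAcyclic_iff_forall_adj_isBridge.2 fun x y hxy => ?_⟩
  obtain ⟨hne, rfl | rfl⟩ := parentGraph_adj.1 hxy
  · exact parentGraph_isBridge hdec hroot fun h => hne (by rw [h, hroot])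
  · rw [Sym2.eq_swap]
    exact parentGraph_isBridge hdec hroot fun h => hne (by rw [h, hroot])

end SimpleGraph

end ParentGraph

lemma SimpleGraph.induce_iUnion_connected {I X : Type*} {G : SimpleGraph X} (hG : G.Connected)
    (T : SimpleGraph I) {f : X → Set I} (hf : ∀ x, (T.induce (f x)).Connected)
    (hadj : ∀ x y, G.Adj x y → (f x ∩ f y).Nonempty) : (T.induce (⋃ x, f x)).Connected := by
  have hsub : ∀ x, f x ⊆ ⋃ x, f x := Set.subset_iUnion f
  have hreach : ∀ x y (_ : G.Walk x y) i (hi : i ∈ f x) j (hj : j ∈ f y),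
      (T.induce (⋃ x, f x)).Reachable ⟨i, hsub x hi⟩ ⟨j, hsub y hj⟩ := by
    intro x y q
    induction q with
    | nil => exact fun i hi j hj =>
        ((hf _).preconnected ⟨i, hi⟩ ⟨j, hj⟩).map (induceHomOfLE T (hsub _)).toHom
    | cons h _ ih =>
      intro i hi j hj
      obtain ⟨k, hk, hk'⟩ := hadj _ _ h
      exact (((hf _).preconnected ⟨i, hi⟩ ⟨k, hk⟩).map (induceHomOfLE T (hsub _)).toHom).trans
        (ih k hk' j hj)
  obtain ⟨x⟩ := hG.nonempty
  obtain ⟨⟨i, hi⟩⟩ := (hf x).nonempty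
  have : Nonempty ↥(⋃ x, f x) := ⟨⟨i, hsub x hi⟩⟩
  refine ⟨fun ⟨i, hi⟩ ⟨j, hj⟩ => ?_⟩
  obtain ⟨x, hx⟩ := Set.mem_iUnion.1 hi
  obtain ⟨y, hy⟩ := Set.mem_iUnion.1 hj
  exact hreach x y (hG.preconnected x y).some i hx j hy

section BranchBag

variable {V W : Type*}

open Classical in
noncomputable def branchIndex (φ : V → Set W) (w : W) : Option V :=
  if h : ∃ v, w ∈ φ v then some h.choose else none

lemma branchIndex_eq_some {φ : V → Set W} (hφ : ∀ u v, u ≠ v → Disjoint (φ u) (φ v)) {w : W}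
    {v : V} : branchIndex φ w = some v ↔ w ∈ φ v := by
  unfold branchIndex
  split_ifs with h
  · refine ⟨fun hv => Option.some_injective _ hv ▸ h.choose_spec, fun hw => ?_⟩
    by_contra hne
    exact Set.disjoint_left.1 (hφ _ _ (fun h' => hne (congrArg some h'))) h.choose_spec hw
  · simpa using fun hw => h ⟨v, hw⟩

open Classical in
noncomputable def branchBag (φ : V → Set W) (b : Finset W) : Finset V :=
  (b.image (branchIndex φ)).eraseNone

lemma mem_branchBag {φ : V → Set W} (hφ : ∀ u v, u ≠ v → Disjoint (φ u) (φ v)) {b : Finset W}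
    {v : V} : v ∈ branchBag φ b ↔ ∃ w ∈ b, w ∈ φ v := by
  simp [branchBag, branchIndex_eq_some hφ]

open Classical in
lemma card_branchBag_le (φ : V → Set W) (b : Finset W) : (branchBag φ b).card ≤ b.card :=
  (Finset.card_eraseNone_le _).trans Finset.card_image_le

end BranchBag

variable {V W I : Type} in
lemma IsMinor.exists_isTreeDecomp {H : SimpleGraph V} {G : SimpleGraph W} (hHG : IsMinor H G)
    {T : SimpleGraph I} {B : I → Finset W} (hB : IsTreeDecomp G T B) :
    ∃ B' : I → Finset V, IsTreeDecomp H T B' ∧ ∀ i, (B' i).card ≤ (B i).card := by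
  obtain ⟨φ, hconn, hdisj, hedge⟩ := hHG
  obtain ⟨htree, hcover, hedgeCover, hbagConn⟩ := hB
  refine ⟨fun i => branchBag φ (B i), ⟨htree, fun v => ?_, fun u v huv => ?_, fun v => ?_⟩,
    fun i => card_branchBag_le φ (B i)⟩
  · obtain ⟨⟨w, hw⟩⟩ := (hconn v).nonempty
    obtain ⟨i, hi⟩ := hcover w
    exact ⟨i, (mem_branchBag hdisj).2 ⟨w, hi, hw⟩⟩
  · obtain ⟨a, ha, b, hb, hab⟩ := hedge u v huv
    obtain ⟨i, hai, hbi⟩ := hedgeCover a b hab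
    exact ⟨i, (mem_branchBag hdisj).2 ⟨a, hai, ha⟩, (mem_branchBag hdisj).2 ⟨b, hbi, hb⟩⟩
  · have hS : {i | v ∈ branchBag φ (B i)} = ⋃ w : φ v, {i | w.1 ∈ B i} := by
      ext i
      simp [mem_branchBag hdisj, and_comm]
    rw [hS]
    exact induce_iUnion_connected (hconn v) T (fun w => hbagConn w) fun w w' hww' =>
      hedgeCover w w' hww'

variable {V I : Type} in
lemma treewidth_le_of_isTreeDecomp {G : SimpleGraph V} {T : SimpleGraph I} {B : I → Finset V}
    (hB : IsTreeDecomp G T B) {k : ℕ} (hk : ∀ i, (B i).card ≤ k + 1) : treewidth G ≤ k :=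
  Nat.sInf_le ⟨I, T, B, hB, hk⟩

lemma Finset.card_le_mul_of_injOn {α : Type*} {s : Finset α} {p q : ℕ} (f : α → ℕ × ℕ)
    (hf : ∀ x ∈ s, (f x).1 < p ∧ (f x).2 < q) (hinj : Set.InjOn f s) : s.card ≤ p * q :=
  (Finset.card_le_card_of_injOn f (t := Finset.range p ×ˢ Finset.range q)
    (fun x hx => by simpa using hf x hx) hinj).trans (by simp)

def hardwareParent (m : ℕ) : ℕ × ℕ × Bool → ℕ × ℕ × Bool
  | (A, B + 1, s) => (A, B, s)
  | (A, 0, true) => (A, m - 1, false)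
  | (A + 1, 0, false) => (A, m - 1, false)
  | (0, 0, false) => (0, 0, false)

def hardwareRank (m : ℕ) : ℕ × ℕ × Bool → ℕ
  | (A, B, false) => A * (m + 1) + B
  | (A, B, true) => A * (m + 1) + m + 1 + B

def hardwareBag (m c : ℕ) : ℕ × ℕ × Bool → Finset (Fin m × Fin m × Fin (2 * c))
  | (A, B, false) => {x | x.2.2.val < c ∧
      (x.1.val = A ∧ x.2.1.val ≤ B ∨ x.1.val + 1 = A ∧ B ≤ x.2.1.val)}
  | (A, B, true) => {x | x.1.val = A ∧
      (x.2.2.val < c ∧ B ≤ x.2.1.val ∨ c ≤ x.2.2.val ∧ (x.2.1.val = B ∨ x.2.1.val + 1 = B))}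

lemma hardwareRank_parent_lt (m : ℕ) :
    ∀ i, i ≠ (0, 0, false) → hardwareRank m (hardwareParent m i) < hardwareRank m i := by
  rintro ⟨_ | A, _ | B, _ | _⟩ hi <;> simp [hardwareParent, hardwareRank, add_mul] at hi ⊢

lemma mem_hardwareBag_false {m c A B : ℕ} {x : Fin m × Fin m × Fin (2 * c)} :
    x ∈ hardwareBag m c (A, B, false) ↔ (x.2.2 : ℕ) < c ∧
      ((x.1 : ℕ) = A ∧ (x.2.1 : ℕ) ≤ B ∨ (x.1 : ℕ) + 1 = A ∧ B ≤ (x.2.1 : ℕ)) := by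
  simp [hardwareBag]

lemma mem_hardwareBag_true {m c A B : ℕ} {x : Fin m × Fin m × Fin (2 * c)} :
    x ∈ hardwareBag m c (A, B, true) ↔ (x.1 : ℕ) = A ∧ ((x.2.2 : ℕ) < c ∧ B ≤ (x.2.1 : ℕ) ∨
      c ≤ (x.2.2 : ℕ) ∧ ((x.2.1 : ℕ) = B ∨ (x.2.1 : ℕ) + 1 = B)) := by
  simp [hardwareBag]

lemma card_hardwareBag_le (m c : ℕ) (i : ℕ × ℕ × Bool) :
    (hardwareBag m c i).card ≤ (m + 1) * c := by
  obtain ⟨A, B, _ | _⟩ := i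
  · refine Finset.card_le_mul_of_injOn
      (fun x => (if (x.1 : ℕ) = A then x.2.1 else x.2.1 + 1, x.2.2))
      (fun x hx => ?_) fun x hx y hy hxy => ?_
    · have := mem_hardwareBag_false.1 hx
      split_ifs <;> omega
    · rw [Finset.mem_coe, mem_hardwareBag_false] at hx hy
      simp only [Prod.ext_iff, Fin.ext_iff] at hxy ⊢
      split_ifs at hxy <;> omega
  · refine Finset.card_le_mul_of_injOn
      (fun x => if (x.2.2 : ℕ) < c then (x.2.1, x.2.2)
        else (if (x.2.1 : ℕ) = B then m else x.2.1, x.2.2 - c))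
      (fun x hx => ?_) fun x hx y hy hxy => ?_
    · have := mem_hardwareBag_true.1 hx
      split_ifs <;> omega
    · rw [Finset.mem_coe, mem_hardwareBag_true] at hx hy
      simp only [Prod.ext_iff, Fin.ext_iff] at hxy ⊢
      split_ifs at hxy <;> omega

def hardwareHome (c : ℕ) {m : ℕ} (x : Fin m × Fin m × Fin (2 * c)) : ℕ × ℕ × Bool :=
  (x.1, x.2.1, decide (c ≤ x.2.2))

lemma mem_hardwareBag_home {m c : ℕ} (x : Fin m × Fin m × Fin (2 * c)) :
    x ∈ hardwareBag m c (hardwareHome c x) := by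
  rcases le_or_gt c (x.2.2 : ℕ) with hdc | hdc
  · rw [hardwareHome, decide_eq_true hdc]
    exact mem_hardwareBag_true.2 ⟨rfl, Or.inr ⟨hdc, Or.inl rfl⟩⟩
  · rw [hardwareHome, decide_eq_false hdc.not_ge]
    exact mem_hardwareBag_false.2 ⟨hdc, Or.inl ⟨rfl, le_rfl⟩⟩

lemma hardwareParent_mem_of_ne_home {m c : ℕ} {x : Fin m × Fin m × Fin (2 * c)}
    {i : ℕ × ℕ × Bool} (hi : x ∈ hardwareBag m c i) (hne : i ≠ hardwareHome c x) :
    i ≠ (0, 0, false) ∧ x ∈ hardwareBag m c (hardwareParent m i) := by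
  obtain ⟨_ | A, _ | B, _ | _⟩ := i <;> by_cases hdc : c ≤ (x.2.2 : ℕ) <;>
    simp only [hardwareHome, hardwareParent, hdc, decide_true, decide_false, mem_hardwareBag_false,
      mem_hardwareBag_true, ne_eq, Prod.mk.injEq, Bool.false_eq_true, Bool.true_eq_false, and_true,
      and_false, not_false_eq_true, true_and] at hi hne ⊢ <;> omega

lemma exists_hardwareBag_of_adj {m c : ℕ} {x y : Fin m × Fin m × Fin (2 * c)}
    (h : (hardwareGraph m c).Adj x y) : ∃ i, x ∈ hardwareBag m c i ∧ y ∈ hardwareBag m c i := by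
  simp only [hardwareGraph, fromRel_adj] at h
  obtain ⟨-, (h | h | h) | (h | h | h)⟩ := h
  · refine ⟨(x.1, x.2.1, true), ?_, ?_⟩ <;> rw [mem_hardwareBag_true] <;> omega
  · refine ⟨(y.1, x.2.1, false), ?_, ?_⟩ <;> rw [mem_hardwareBag_false] <;> omega
  · refine ⟨(x.1, y.2.1, true), ?_, ?_⟩ <;> rw [mem_hardwareBag_true] <;> omega
  · refine ⟨(x.1, x.2.1, true), ?_, ?_⟩ <;> rw [mem_hardwareBag_true] <;> omega
  · refine ⟨(x.1, x.2.1, false), ?_, ?_⟩ <;> rw [mem_hardwareBag_false] <;> omega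
  · refine ⟨(x.1, x.2.1, true), ?_, ?_⟩ <;> rw [mem_hardwareBag_true] <;> omega

lemma hardwareGraph_isTreeDecomp (m c : ℕ) :
    IsTreeDecomp (hardwareGraph m c) (parentGraph (hardwareParent m)) (hardwareBag m c) :=
  ⟨parentGraph_isTree (hardwareRank_parent_lt m) rfl, fun x => ⟨_, mem_hardwareBag_home x⟩,
    fun _ _ => exists_hardwareBag_of_adj, fun x =>
    parentGraph_induce_connected (hardwareRank_parent_lt m) (mem_hardwareBag_home x)
      fun _ hi hne => hardwareParent_mem_of_ne_home hi hne⟩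

theorem not_isMinor_of_treewidth_ge_general (m c : ℕ) (hc : 1 ≤ c)
    {V : Type} (P : SimpleGraph V)
    (hP : c * m + c ≤ treewidth P) :
    ¬ IsMinor P (hardwareGraph m c) := by
  intro hPF
  obtain ⟨B, hB, hcard⟩ := hPF.exists_isTreeDecomp (hardwareGraph_isTreeDecomp m c)
  have htw : treewidth P ≤ c * m + c - 1 :=
    treewidth_le_of_isTreeDecomp hB fun i => (hcard i).trans <|
      (card_hardwareBag_le m c i).trans_eq (by rw [add_one_mul, mul_comm]; omega)
  omega

/-- For every `m ≥ 1` and `c ≥ 1`, any graph `P` with treewidth at least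
`c * m + c` is not a minor of the hardware graph `F(m, c)`. -/
theorem not_isMinor_of_treewidth_ge (m c : ℕ) (hm : 1 ≤ m) (hc : 1 ≤ c)
    {V : Type} [Fintype V] (P : SimpleGraph V)
    (hP : c * m + c ≤ treewidth P) :
    ¬ IsMinor P (hardwareGraph m c) :=
  not_isMinor_of_treewidth_ge_general m c hc P hP
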